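/- For every r ≥ 2, Δ ≥ 2 and ε > 0, there exists λ > 0 such that the following holds for every p ∈ (0,1] and every sufficiently large n. Let H be a graph on at least two vertices with maximum degree Δ(H) ≤ Δ, and let Γ be a graph obtained by replacing every vertex x ∈ V(H) with an independent set V_x of order n (the sets V_x pairwise disjoint, with no edges of Γ inside any V_x and no edges between V_x and V_y when xy ∉ E(H)) and replacing every edge xy ∈ E(H) by a (λ,p)-uniform bipartite graph between V_x and V_y. Then, for every r-colouring of the edges of Γ, there exist an r-colouring φ of the edges of H and, for every x ∈ V(H), a subset U_x ⊆ V_x of order |U_x| ≥ λn such that for each edge xy ∈ E(H), the pair (U_x, U_y) is (ε, p/(2r))-lower-regular in the spanning subgraph of Γ consisting of the edges coloured φ(xy). -/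

import Mathlib

/-- The number of edges of `G` between the (disjoint) sets `A` and `B`, counted as
ordered pairs `(a, b)` with `a ∈ A`, `b ∈ B` adjacent. -/
noncomputable def eCount {V : Type*} (G : SimpleGraph V) (A B : Finset V) : ℕ :=
  Set.ncard {q : V × V | q.1 ∈ A ∧ q.2 ∈ B ∧ G.Adj q.1 q.2}

/-- The pair `(V₁, V₂)` is `(ε, p)`-lower-regular in `G`. -/
def LowerRegularPair {V : Type*} (G : SimpleGraph V) (ε p : ℝ) (V₁ V₂ : Finset V) : Prop :=
  ∀ U₁ ⊆ V₁, ∀ U₂ ⊆ V₂, ε * V₁.card ≤ U₁.card → ε * V₂.card ≤ U₂.card →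
    (1 - ε) * p * U₁.card * U₂.card ≤ (eCount G U₁ U₂ : ℝ)

/-- The spanning subgraph of `Γ` consisting of the edges receiving colour `c`
under the edge-colouring `χ`. -/
def colourSubgraph {V : Type*} {r : ℕ} (Γ : SimpleGraph V) (χ : Sym2 V → Fin r)
    (c : Fin r) : SimpleGraph V where
  Adj a b := Γ.Adj a b ∧ χ s(a, b) = c
  symm := ⟨fun a b h => ⟨Γ.symm.symm a b h.1, by rw [Sym2.eq_swap]; exact h.2⟩⟩
  loopless := ⟨fun a h => Γ.loopless.irrefl a h.1⟩


open Finset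

section Prelim

open scoped Classical

variable {V : Type*} [DecidableEq V]

lemma eCount_eq (G : SimpleGraph V) (A B : Finset V) :
    eCount G A B = ((A ×ˢ B).filter fun q => G.Adj q.1 q.2).card := by
  rw [eCount, ← Set.ncard_coe_finset]
  congr 1
  ext ⟨u, v⟩
  simp [Finset.mem_product, and_assoc]

lemma eCount_mono (G : SimpleGraph V) {A A' B B' : Finset V} (hA : A ⊆ A') (hB : B ⊆ B') :
    eCount G A B ≤ eCount G A' B' := by
  rw [eCount_eq, eCount_eq]
  apply card_le_card
  intro q hq
  simp only [mem_filter, Finset.mem_product] at hq ⊢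
  exact ⟨⟨hA hq.1.1, hB hq.1.2⟩, hq.2⟩

lemma eCount_le_of_le {G G' : SimpleGraph V} (h : ∀ a b, G.Adj a b → G'.Adj a b)
    (A B : Finset V) : eCount G A B ≤ eCount G' A B := by
  rw [eCount_eq, eCount_eq]
  apply card_le_card
  intro q hq
  simp only [mem_filter] at hq ⊢
  exact ⟨hq.1, h _ _ hq.2⟩

lemma eCount_split_left (G : SimpleGraph V) {U S : Finset V} (h : U ⊆ S) (T : Finset V) :
    eCount G S T = eCount G U T + eCount G (S \ U) T := by
  rw [eCount_eq, eCount_eq, eCount_eq]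
  rw [← card_union_of_disjoint, ← filter_union, ← union_product, union_sdiff_of_subset h]
  · simp only [disjoint_left, mem_filter, Finset.mem_product, mem_sdiff]
    intro q hq hq'
    exact hq'.1.1.2 hq.1.1

lemma eCount_split_right (G : SimpleGraph V) (S : Finset V) {U T : Finset V} (h : U ⊆ T) :
    eCount G S T = eCount G S U + eCount G S (T \ U) := by
  rw [eCount_eq, eCount_eq, eCount_eq]
  rw [← card_union_of_disjoint, ← filter_union, ← product_union, union_sdiff_of_subset h]
  · simp only [disjoint_left, mem_filter, Finset.mem_product, mem_sdiff]
    intro q hq hq'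
    exact hq'.1.2.2 hq.1.2

lemma eCount_comm (G : SimpleGraph V) (A B : Finset V) : eCount G A B = eCount G B A := by
  rw [eCount_eq, eCount_eq]
  apply card_bij' (fun q _ => q.swap) (fun q _ => q.swap)
  · intro q _; rfl
  · intro q _; rfl
  · intro q hq
    simp only [mem_filter, Finset.mem_product] at hq ⊢
    exact ⟨⟨hq.1.2, hq.1.1⟩, hq.2.symm⟩
  · intro q hq
    simp only [mem_filter, Finset.mem_product] at hq ⊢
    exact ⟨⟨hq.1.2, hq.1.1⟩, hq.2.symm⟩

lemma eCount_colour_sum {r : ℕ} (Γ : SimpleGraph V) (χ : Sym2 V → Fin r) (A B : Finset V) :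
    ∑ c : Fin r, eCount (colourSubgraph Γ χ c) A B = eCount Γ A B := by
  simp only [eCount_eq]
  rw [Finset.card_eq_sum_card_fiberwise (f := fun q => χ s(q.1, q.2))
    (t := (univ : Finset (Fin r))) (fun _ _ => mem_univ _)]
  refine Finset.sum_congr rfl fun c _ => ?_
  rw [filter_filter]
  congr 1
  ext q
  rw [Finset.mem_filter, Finset.mem_filter]
  rfl

lemma exists_majority {r : ℕ} (hr : 0 < r) (Γ : SimpleGraph V) (χ : Sym2 V → Fin r)
    (A B : Finset V) :
    ∃ c : Fin r, eCount Γ A B ≤ r * eCount (colourSubgraph Γ χ c) A B := by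
  by_contra hcon
  push_neg at hcon
  have h1 : ∑ c : Fin r, (r * eCount (colourSubgraph Γ χ c) A B) <
      ∑ _c : Fin r, eCount Γ A B := by
    apply Finset.sum_lt_sum_of_nonempty
    · exact univ_nonempty_iff.2 ⟨⟨0, hr⟩⟩
    · exact fun c _ => hcon c
  rw [← Finset.mul_sum, eCount_colour_sum, Finset.sum_const, card_univ, Fintype.card_fin,
    smul_eq_mul] at h1
  omega

lemma LR_mono {G : SimpleGraph V} {ε ε' q : ℝ} {A B : Finset V}
    (h : LowerRegularPair G ε q A B) (hε : ε ≤ ε') (hq : 0 ≤ q) :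
    LowerRegularPair G ε' q A B := by
  intro U₁ h1 U₂ h2 hc1 hc2
  have e1 : ε * A.card ≤ (U₁.card : ℝ) :=
    le_trans (mul_le_mul_of_nonneg_right hε (Nat.cast_nonneg _)) hc1
  have e2 : ε * B.card ≤ (U₂.card : ℝ) :=
    le_trans (mul_le_mul_of_nonneg_right hε (Nat.cast_nonneg _)) hc2
  have := h U₁ h1 U₂ h2 e1 e2
  have hnn : (0:ℝ) ≤ q * U₁.card * U₂.card :=
    mul_nonneg (mul_nonneg hq (Nat.cast_nonneg _)) (Nat.cast_nonneg _)
  nlinarith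

lemma LR_symm {G : SimpleGraph V} {ε q : ℝ} {A B : Finset V}
    (h : LowerRegularPair G ε q A B) : LowerRegularPair G ε q B A := by
  intro U₁ h1 U₂ h2 hc1 hc2
  have := h U₂ h2 U₁ h1 hc2 hc1
  rw [eCount_comm] at this
  nlinarith [this]

lemma LR_shrink {G : SimpleGraph V} {τ κ q : ℝ} {A B A' B' : Finset V}
    (h : LowerRegularPair G τ q A B) (hA : A' ⊆ A) (hB : B' ⊆ B)
    (h1 : τ * A.card ≤ κ * A'.card) (h2 : τ * B.card ≤ κ * B'.card)
    (hτκ : τ ≤ κ) (hq : 0 ≤ q) : LowerRegularPair G κ q A' B' := by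
  intro U₁ hU₁ U₂ hU₂ hc1 hc2
  have := h U₁ (hU₁.trans hA) U₂ (hU₂.trans hB) (le_trans h1 hc1) (le_trans h2 hc2)
  have hnn : (0:ℝ) ≤ q * U₁.card * U₂.card :=
    mul_nonneg (mul_nonneg hq (Nat.cast_nonneg _)) (Nat.cast_nonneg _)
  nlinarith

end Prelim


section Constants

/-- auxiliary: the witness-shrink factor. -/
noncomputable def delf (r : ℕ) (t : ℝ) : ℝ := t ^ 3 / (64 * r)

/-- auxiliary: the number of density-increment steps. -/
noncomputable def Kf (r : ℕ) (t : ℝ) : ℕ := ⌈8 * (r : ℝ) / t ^ 3⌉₊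

/-- auxiliary: the total shrink factor of one extraction. -/
noncomputable def muf (r : ℕ) (t : ℝ) : ℝ := delf r t ^ Kf r t

/-- auxiliary: the sequence of regularity parameters, one per round. -/
noncomputable def etaSeq (r : ℕ) (e1 : ℝ) : ℕ → ℝ
  | 0 => e1
  | (l + 1) => etaSeq r e1 l * muf r (etaSeq r e1 l)

variable {r : ℕ} {t t₁ t₂ e1 : ℝ}

lemma rpos (hr : 1 ≤ r) : (0 : ℝ) < r := by exact_mod_cast Nat.lt_of_lt_of_le Nat.zero_lt_one hr

lemma delf_pos (hr : 1 ≤ r) (ht : 0 < t) : 0 < delf r t :=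
  div_pos (pow_pos ht 3) (by have := rpos hr; linarith)

lemma delf_le (hr : 1 ≤ r) (ht : 0 < t) (ht2 : t ≤ 1/2) : delf r t ≤ t := by
  have h0 := rpos (r := r) hr
  have hr' : (1 : ℝ) ≤ r := by exact_mod_cast hr
  rw [delf, div_le_iff₀ (by linarith)]
  have h2 : t ^ 2 ≤ 1 := by nlinarith
  have h3 : t ^ 3 ≤ t := by nlinarith [mul_le_mul_of_nonneg_left h2 ht.le]
  nlinarith [mul_le_mul_of_nonneg_left hr' ht.le]

lemma muf_pos (hr : 1 ≤ r) (ht : 0 < t) : 0 < muf r t := pow_pos (delf_pos hr ht) _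

lemma muf_le_one (hr : 1 ≤ r) (ht : 0 < t) (ht2 : t ≤ 1/2) : muf r t ≤ 1 :=
  pow_le_one₀ (delf_pos hr ht).le (by have := delf_le hr ht ht2; linarith)

lemma muf_mono (hr : 1 ≤ r) (h1 : 0 < t₁) (h12 : t₁ ≤ t₂) (h2 : t₂ ≤ 1/2) :
    muf r t₁ ≤ muf r t₂ := by
  have hd1 : 0 < delf r t₁ := delf_pos hr h1
  have hd12 : delf r t₁ ≤ delf r t₂ := by
    rw [delf, delf]
    gcongr
    all_goals first
      | exact h1.le
      | positivity
      | (have := rpos (r := r) hr; linarith)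
  have hd1le : delf r t₁ ≤ 1 := (delf_le hr h1 (h12.trans h2)).trans (by linarith)
  have hK : Kf r t₂ ≤ Kf r t₁ := by
    apply Nat.ceil_le_ceil
    gcongr
    all_goals first
      | exact h1.le
      | positivity
      | (have := rpos (r := r) hr; positivity)
  calc muf r t₁ = delf r t₁ ^ Kf r t₁ := rfl
    _ ≤ delf r t₁ ^ Kf r t₂ := pow_le_pow_of_le_one hd1.le hd1le hK
    _ ≤ delf r t₂ ^ Kf r t₂ := pow_le_pow_left₀ hd1.le hd12 _

lemma etaSeq_facts (hr : 1 ≤ r) (he : 0 < e1) (he2 : e1 ≤ 1/2) :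
    ∀ l, 0 < etaSeq r e1 l ∧ etaSeq r e1 l ≤ 1/2 := by
  intro l
  induction l with
  | zero => exact ⟨he, he2⟩
  | succ l ih =>
    refine ⟨mul_pos ih.1 (muf_pos hr ih.1), ?_⟩
    have h1 := muf_le_one hr ih.1 ih.2
    have h0 := (muf_pos hr ih.1).le
    show etaSeq r e1 l * muf r (etaSeq r e1 l) ≤ 1/2
    nlinarith [ih.1, ih.2]

lemma etaSeq_succ_le (hr : 1 ≤ r) (he : 0 < e1) (he2 : e1 ≤ 1/2) (l : ℕ) :
    etaSeq r e1 (l + 1) ≤ etaSeq r e1 l := by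
  have h := etaSeq_facts hr he he2 l
  have h1 := muf_le_one hr h.1 h.2
  have h0 := (muf_pos hr h.1).le
  show etaSeq r e1 l * muf r (etaSeq r e1 l) ≤ etaSeq r e1 l
  nlinarith [h.1]

lemma etaSeq_anti (hr : 1 ≤ r) (he : 0 < e1) (he2 : e1 ≤ 1/2) :
    ∀ i j, i ≤ j → etaSeq r e1 j ≤ etaSeq r e1 i := by
  intro i j hij
  induction j with
  | zero => obtain rfl : i = 0 := Nat.le_zero.mp hij; exact le_rfl
  | succ l ih =>
    rcases Nat.lt_or_ge i (l + 1) with h | h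
    · exact le_trans (etaSeq_succ_le hr he he2 l) (ih (by omega))
    · obtain rfl : i = l + 1 := by omega
      exact le_rfl

end Constants


section Working

open scoped Classical

variable {n r : ℕ} {X : Type} [Fintype X] {H : SimpleGraph X}
  {Γ : SimpleGraph (X × Fin n)} {χ : Sym2 (X × Fin n) → Fin r} {p lam q : ℝ}

lemma card_le_fibre {x : X} {A : Finset (X × Fin n)} (h : ∀ w ∈ A, w.1 = x) :
    A.card ≤ n := by
  have hsub : A ⊆ {x} ×ˢ (univ : Finset (Fin n)) := by
    intro w hw
    simp only [Finset.mem_product, Finset.mem_singleton, Finset.mem_univ, and_true]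
    exact h w hw
  have h2 := card_le_card hsub
  simpa using h2

lemma pad_bound
    (hunif : ∀ x y : X, H.Adj x y →
      ∀ A B : Finset (X × Fin n), (∀ w ∈ A, w.1 = x) → (∀ w ∈ B, w.1 = y) →
        lam * n ≤ (A.card : ℝ) → lam * n ≤ (B.card : ℝ) →
        (1 - lam) * A.card * B.card * p ≤ (eCount Γ A B : ℝ) ∧
        (eCount Γ A B : ℝ) ≤ (1 + lam) * A.card * B.card * p)
    (hlam0 : 0 < lam) (hlam2 : lam ≤ 1/2) (hp : 0 ≤ p)
    {x y : X} (hxy : H.Adj x y) {A B : Finset (X × Fin n)}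
    (hAf : ∀ w ∈ A, w.1 = x) (hBf : ∀ w ∈ B, w.1 = y)
    (hA : lam * n ≤ (A.card : ℝ)) {ξ : ℝ}
    (hB1 : (B.card : ℝ) ≤ ξ) (hB2 : lam * n + 1 ≤ ξ) (hB3 : ξ ≤ n) :
    (eCount Γ A B : ℝ) ≤ 2 * p * A.card * ξ := by
  set m : ℕ := max (⌈lam * n⌉₊) B.card with hm
  have hBsub : B ⊆ ({y} ×ˢ (univ : Finset (Fin n))) := by
    intro w hw
    simp only [Finset.mem_product, Finset.mem_singleton, Finset.mem_univ, and_true]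
    exact hBf w hw
  have hfibcard : ({y} ×ˢ (univ : Finset (Fin n))).card = n := by simp
  have hmn : m ≤ ({y} ×ˢ (univ : Finset (Fin n))).card := by
    rw [hfibcard]
    have h1 : ⌈lam * n⌉₊ ≤ n := Nat.ceil_le.2 (by linarith)
    have h2 : B.card ≤ n := card_le_fibre hBf
    omega
  obtain ⟨B', hBB', hB'sub, hB'card⟩ := exists_subsuperset_card_eq hBsub (le_max_right _ _) hmn
  have hB'f : ∀ w ∈ B', w.1 = y := by
    intro w hw
    have := hB'sub hw
    simp only [Finset.mem_product, Finset.mem_singleton] at this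
    exact this.1
  have hB'ge : lam * n ≤ (B'.card : ℝ) := by
    rw [hB'card]
    calc lam * n ≤ (⌈lam * n⌉₊ : ℝ) := Nat.le_ceil _
      _ ≤ (m : ℝ) := by exact_mod_cast le_max_left _ _
  have hup := (hunif x y hxy A B' hAf hB'f hA hB'ge).2
  have hmon : (eCount Γ A B : ℝ) ≤ eCount Γ A B' := by
    exact_mod_cast eCount_mono Γ subset_rfl hBB'
  have hmξ : (B'.card : ℝ) ≤ ξ := by
    rw [hB'card]
    rw [Nat.cast_max]
    apply max_le
    · calc (⌈lam * n⌉₊ : ℝ) ≤ lam * n + 1 := (Nat.ceil_lt_add_one (by positivity)).le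
        _ ≤ ξ := hB2
    · exact hB1
  have hA0 : (0 : ℝ) ≤ A.card := Nat.cast_nonneg _
  have hB'0 : (0 : ℝ) ≤ B'.card := Nat.cast_nonneg _
  calc (eCount Γ A B : ℝ) ≤ eCount Γ A B' := hmon
    _ ≤ (1 + lam) * A.card * B'.card * p := hup
    _ ≤ 2 * p * A.card * ξ := by nlinarith [mul_le_mul_of_nonneg_left hmξ (mul_nonneg hp hA0)]


set_option maxHeartbeats 1000000 in
lemma rec_lemma
    (hr : 2 ≤ r) (hp : 0 < p) (hq0 : 0 < q) (hpq : p = 2 * r * q)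
    (hlam0 : 0 < lam) (hlam2 : lam ≤ 1/2) (hln : 1 ≤ lam * n)
    (hunif : ∀ x y : X, H.Adj x y →
      ∀ A B : Finset (X × Fin n), (∀ w ∈ A, w.1 = x) → (∀ w ∈ B, w.1 = y) →
        lam * n ≤ (A.card : ℝ) → lam * n ≤ (B.card : ℝ) →
        (1 - lam) * A.card * B.card * p ≤ (eCount Γ A B : ℝ) ∧
        (eCount Γ A B : ℝ) ≤ (1 + lam) * A.card * B.card * p)
    {η : ℝ} (hη0 : 0 < η) (hη2 : η ≤ 1/2)
    {x y : X} (hxy : H.Adj x y) (c : Fin r) (m : ℕ) :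
    ∀ S T : Finset (X × Fin n), (∀ w ∈ S, w.1 = x) → (∀ w ∈ T, w.1 = y) →
      lam * n ≤ (η^3/(64*r))^(m+1) * S.card → lam * n ≤ (η^3/(64*r))^(m+1) * T.card →
      q * ((S.card : ℝ) * T.card) ≤ (eCount (colourSubgraph Γ χ c) S T : ℝ) →
      (2*p - m * (η^3*q/2)) * ((S.card : ℝ) * T.card) ≤ (eCount (colourSubgraph Γ χ c) S T : ℝ) →
      ∃ S' T', S' ⊆ S ∧ T' ⊆ T ∧
        (η^3/(64*r))^m * S.card ≤ (S'.card : ℝ) ∧ (η^3/(64*r))^m * T.card ≤ (T'.card : ℝ) ∧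
        LowerRegularPair (colourSubgraph Γ χ c) η q S' T' := by
  have hr1 : (1:ℝ) ≤ r := by exact_mod_cast le_trans one_le_two hr
  have hrpos : (0:ℝ) < r := lt_of_lt_of_le one_pos hr1
  set δ : ℝ := η^3/(64*r) with hδdef
  have hδ0 : 0 < δ := div_pos (pow_pos hη0 3) (by linarith)
  have hδη : δ ≤ η := delf_le (le_trans (by norm_num) hr) hη0 hη2
  have hδhalf : δ ≤ 1/2 := le_trans hδη (by linarith)
  have hδ1 : δ ≤ 1 := by linarith
  have h2pδ : 2*p*δ = η^3*q/16 := by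
    rw [hpq, hδdef]; field_simp; ring
  induction m with
  | zero =>
    intro S T hSf hTf hfS hfT hq1 hq2
    exfalso
    have h0s : (0:ℝ) ≤ S.card := Nat.cast_nonneg _
    have h0t : (0:ℝ) ≤ T.card := Nat.cast_nonneg _
    have hs1 : lam * n ≤ (S.card : ℝ) := by
      refine le_trans hfS ?_
      rw [pow_one]
      have h := mul_le_mul_of_nonneg_right hδ1 h0s
      linarith only [h]
    have ht1 : lam * n ≤ (T.card : ℝ) := by
      refine le_trans hfT ?_
      rw [pow_one]
      have h := mul_le_mul_of_nonneg_right hδ1 h0t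
      linarith only [h]
    have hcap := (hunif x y hxy S T hSf hTf hs1 ht1).2
    have hce : (eCount (colourSubgraph Γ χ c) S T : ℝ) ≤ (eCount Γ S T : ℝ) := by
      exact_mod_cast eCount_le_of_le (G := colourSubgraph Γ χ c) (G' := Γ)
        (fun a b h => h.1) S T
    have hs0 : (1:ℝ) ≤ S.card := le_trans hln hs1
    have ht0 : (1:ℝ) ≤ T.card := le_trans hln ht1
    have hst1 : (1:ℝ) ≤ (S.card : ℝ) * T.card := by
      have h := mul_le_mul hs0 ht0 (by norm_num) (le_trans zero_le_one hs0)
      linarith only [h]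
    norm_num at hq2
    have d1 : lam*((S.card : ℝ)*T.card*p) ≤ (1/2)*((S.card : ℝ)*T.card*p) :=
      mul_le_mul_of_nonneg_right hlam2 (by positivity)
    have d2 : p ≤ (S.card : ℝ)*T.card*p := by
      have h := mul_le_mul_of_nonneg_right hst1 hp.le
      linarith only [h]
    linarith only [hq2, hcap, hce, d1, d2, hp]
  | succ m ih =>
    intro S T hSf hTf hfS hfT hq1 hq2
    by_cases hLR : LowerRegularPair (colourSubgraph Γ χ c) η q S T
    · have hd1 : δ^(m+1) ≤ 1 := pow_le_one₀ hδ0.le hδ1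
      refine ⟨S, T, subset_rfl, subset_rfl, ?_, ?_, hLR⟩
      · have h := mul_le_mul_of_nonneg_right hd1 (Nat.cast_nonneg S.card : (0:ℝ) ≤ S.card)
        linarith only [h]
      · have h := mul_le_mul_of_nonneg_right hd1 (Nat.cast_nonneg T.card : (0:ℝ) ≤ T.card)
        linarith only [h]
    · unfold LowerRegularPair at hLR
      push_neg at hLR
      obtain ⟨U₁, hU₁S, U₂, hU₂T, ha, hb, hsp⟩ := hLR
      set Gc := colourSubgraph Γ χ c with hGcdef
      set s : ℝ := (S.card : ℝ) with hsdef
      set t : ℝ := (T.card : ℝ) with htdef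
      set a : ℝ := (U₁.card : ℝ) with hadef
      set b : ℝ := (U₂.card : ℝ) with hbdef
      have h0s : (0:ℝ) ≤ s := Nat.cast_nonneg _
      have h0t : (0:ℝ) ≤ t := Nat.cast_nonneg _
      have h0a : (0:ℝ) ≤ a := Nat.cast_nonneg _
      have h0b : (0:ℝ) ≤ b := Nat.cast_nonneg _
      have haS : a ≤ s := by
        rw [hadef, hsdef]; exact_mod_cast card_le_card hU₁S
      have hbT : b ≤ t := by
        rw [hbdef, htdef]; exact_mod_cast card_le_card hU₂T
      set S₂ := S \ U₁ with hS₂def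
      set T₂ := T \ U₂ with hT₂def
      have hS₂f : ∀ w ∈ S₂, w.1 = x := fun w hw => hSf w (sdiff_subset hw)
      have hT₂f : ∀ w ∈ T₂, w.1 = y := fun w hw => hTf w (sdiff_subset hw)
      have hU₁f : ∀ w ∈ U₁, w.1 = x := fun w hw => hSf w (hU₁S hw)
      have hs2 : (S₂.card : ℝ) = s - a := by
        rw [hS₂def, card_sdiff_of_subset hU₁S, Nat.cast_sub (card_le_card hU₁S)]
      have ht2 : (T₂.card : ℝ) = t - b := by
        rw [hT₂def, card_sdiff_of_subset hU₂T, Nat.cast_sub (card_le_card hU₂T)]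
      have hsplitN : eCount Gc S T = eCount Gc U₁ U₂ + eCount Gc U₁ T₂ + eCount Gc S₂ T := by
        rw [eCount_split_left Gc hU₁S T, eCount_split_right Gc U₁ hU₂T, hS₂def, hT₂def]
      have hsplit : (eCount Gc S T : ℝ) =
          (eCount Gc U₁ U₂ : ℝ) + (eCount Gc U₁ T₂ : ℝ) + (eCount Gc S₂ T : ℝ) := by
        exact_mod_cast congrArg (Nat.cast : ℕ → ℝ) hsplitN
      have hδm2 : δ^(m+1+1) ≤ δ := by
        calc δ^(m+1+1) ≤ δ^1 := pow_le_pow_of_le_one hδ0.le hδ1 (by omega)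
          _ = δ := pow_one δ
      have hδm2' : δ^(m+1+1) ≤ δ^2 := pow_le_pow_of_le_one hδ0.le hδ1 (by omega)
      have hsδ : lam * n ≤ δ * s := le_trans hfS (mul_le_mul_of_nonneg_right hδm2 h0s)
      have htδ : lam * n ≤ δ * t := le_trans hfT (mul_le_mul_of_nonneg_right hδm2 h0t)
      have hsδ2 : lam * n ≤ δ^2 * s := le_trans hfS (mul_le_mul_of_nonneg_right hδm2' h0s)
      have htδ2 : lam * n ≤ δ^2 * t := le_trans hfT (mul_le_mul_of_nonneg_right hδm2' h0t)
      have hδs1 : δ * s ≤ s := by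
        have h := mul_le_mul_of_nonneg_right hδ1 h0s
        linarith only [h]
      have hδt1 : δ * t ≤ t := by
        have h := mul_le_mul_of_nonneg_right hδ1 h0t
        linarith only [h]
      have hδsη : δ * s ≤ η * s := mul_le_mul_of_nonneg_right hδη h0s
      have hlns : lam * n ≤ s := le_trans hsδ hδs1
      have hlnt : lam * n ≤ t := le_trans htδ hδt1
      have hlna : lam * n ≤ a := le_trans hsδ (le_trans hδsη ha)
      have hs1 : (1:ℝ) ≤ s := le_trans hln hlns
      have ht1' : (1:ℝ) ≤ t := le_trans hln hlnt
      have hst1 : (1:ℝ) ≤ s * t := by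
        have h := mul_le_mul hs1 ht1' (by norm_num) (le_trans zero_le_one hs1)
        linarith only [h]
      have hst0 : (0:ℝ) < s * t := lt_of_lt_of_le one_pos hst1
      have hls : lam * n + 1 ≤ δ * s := by
        have hδs0 : (0:ℝ) ≤ δ * s := mul_nonneg hδ0.le h0s
        have k : δ*(δ*s) ≤ (1/2)*(δ*s) := mul_le_mul_of_nonneg_right hδhalf hδs0
        linarith only [hln, hsδ2, k]
      have hlt : lam * n + 1 ≤ δ * t := by
        have hδt0 : (0:ℝ) ≤ δ * t := mul_nonneg hδ0.le h0t
        have k : δ*(δ*t) ≤ (1/2)*(δ*t) := mul_le_mul_of_nonneg_right hδhalf hδt0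
        linarith only [hln, htδ2, k]
      have hδsn : δ * s ≤ n := by
        have h : s ≤ n := by rw [hsdef]; exact_mod_cast card_le_fibre hSf
        linarith only [hδs1, h]
      have hδtn : δ * t ≤ n := by
        have h : t ≤ n := by rw [htdef]; exact_mod_cast card_le_fibre hTf
        linarith only [hδt1, h]
      set D : ℝ := max q (2*p - ((m:ℝ)+1)*(η^3*q/2)) with hDdef
      have hq2' : (2*p - ((m:ℝ)+1)*(η^3*q/2)) * (s*t) ≤ (eCount Gc S T : ℝ) := by
        have h := hq2
        push_cast at h
        linarith only [h]
      have hDst : D * (s*t) ≤ (eCount Gc S T : ℝ) := by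
        rw [hDdef]
        rcases le_total q (2*p - ((m:ℝ)+1)*(η^3*q/2)) with h | h
        · rw [max_eq_right h]; exact hq2'
        · rw [max_eq_left h]; exact hq1
      have hqD : q ≤ D := le_max_left _ _
      have hD0 : (0:ℝ) ≤ D := le_trans hq0.le hqD
      have hg0 : (0:ℝ) ≤ η^3*q/2 := by positivity
      have hηq0 : (0:ℝ) ≤ η*q := mul_nonneg hη0.le hq0.le
      have hDgq : q ≤ D + η^3*q/2 := by linarith only [hqD, hg0]
      have hDgmg : 2*p - (m:ℝ)*(η^3*q/2) ≤ D + η^3*q/2 := by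
        have h := le_max_right q (2*p - ((m:ℝ)+1)*(η^3*q/2))
        rw [← hDdef] at h
        linarith only [h]
      have h1ηq : (0:ℝ) ≤ (1-η)*q := mul_nonneg (by linarith only [hη2]) hq0.le
      have hsple : (eCount Gc U₁ U₂ : ℝ) ≤ (1-η)*q*(a*b) := by linarith only [hsp]
      have habst : η^2*(s*t) ≤ a*b := by
        have h := mul_le_mul ha hb (mul_nonneg hη0.le h0t) h0a
        linarith only [h]
      have hceU : (eCount Gc U₁ T₂ : ℝ) ≤ (eCount Γ U₁ T₂ : ℝ) := by
        exact_mod_cast eCount_le_of_le (G := Gc) (G' := Γ) (fun u v h => h.1) U₁ T₂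
      have hceS : (eCount Gc S₂ T : ℝ) ≤ (eCount Γ S₂ T : ℝ) := by
        exact_mod_cast eCount_le_of_le (G := Gc) (G' := Γ) (fun u v h => h.1) S₂ T
      have hx1 : (η*q + η^3*q/2) * (η^2*(s*t)) ≤ (D + η^3*q/2 - (1-η)*q) * (a*b) := by
        refine mul_le_mul (by linarith only [hqD]) habst
          (mul_nonneg (by positivity) (mul_nonneg h0s h0t)) ?_
        linarith only [hqD, hg0, hηq0]
      have hx7 : (0:ℝ) ≤ η^5*q*(s*t) :=
        mul_nonneg (mul_nonneg (by positivity) hq0.le) (mul_nonneg h0s h0t)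
      have hx8 : (0:ℝ) < η^3*q*(s*t) :=
        mul_pos (mul_pos (pow_pos hη0 3) hq0) hst0
      by_cases h1 : (T₂.card : ℝ) < δ * t
      · have hpad1 : (eCount Γ U₁ T₂ : ℝ) ≤ 2*p*a*(δ*t) :=
          pad_bound hunif hlam0 hlam2 hp.le hxy hU₁f hT₂f hlna h1.le hlt hδtn
        have hc1 : (eCount Gc U₁ T₂ : ℝ) ≤ η^3*q/16*(s*t) := by
          have hat : a*t ≤ s*t := mul_le_mul_of_nonneg_right haS h0t
          have h3 : η^3*q/16*(a*t) ≤ η^3*q/16*(s*t) :=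
            mul_le_mul_of_nonneg_left hat (by positivity)
          calc (eCount Gc U₁ T₂ : ℝ) ≤ 2*p*a*(δ*t) := le_trans hceU hpad1
            _ = (2*p*δ)*(a*t) := by ring
            _ = η^3*q/16*(a*t) := by rw [h2pδ]
            _ ≤ η^3*q/16*(s*t) := h3
        by_cases h2 : (S₂.card : ℝ) < δ * s
        · exfalso
          have hpad2 : (eCount Γ T S₂ : ℝ) ≤ 2*p*t*(δ*s) :=
            pad_bound hunif hlam0 hlam2 hp.le hxy.symm hTf hS₂f hlnt h2.le hls hδsn
          have hc2 : (eCount Gc S₂ T : ℝ) ≤ η^3*q/16*(s*t) := by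
            have hcomm : (eCount Γ S₂ T : ℝ) = (eCount Γ T S₂ : ℝ) := by
              exact_mod_cast congrArg (Nat.cast : ℕ → ℝ) (eCount_comm Γ S₂ T)
            calc (eCount Gc S₂ T : ℝ) ≤ (eCount Γ T S₂ : ℝ) := by rw [← hcomm]; exact hceS
              _ ≤ 2*p*t*(δ*s) := hpad2
              _ = (2*p*δ)*(s*t) := by ring
              _ = η^3*q/16*(s*t) := by rw [h2pδ]
          have hab_le : a*b ≤ s*t := mul_le_mul haS hbT h0b h0s
          have hub : (1-η)*q*(a*b) ≤ (1-η)*q*(s*t) :=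
            mul_le_mul_of_nonneg_left hab_le h1ηq
          have hη214 : η^2 ≤ 1/4 := by nlinarith only [hη0, hη2]
          have hx9 : η^2*(η*q*(s*t)) ≤ (1/4)*(η*q*(s*t)) :=
            mul_le_mul_of_nonneg_right hη214 (mul_nonneg hηq0 (mul_nonneg h0s h0t))
          have hx10 : (0:ℝ) < η*q*(s*t) := mul_pos (mul_pos hη0 hq0) hst0
          linarith only [hq1, hsplit, hsple, hub, hc1, hc2, hx9, hx10]
        · push_neg at h2
          have hkey : (D + η^3*q/2) * ((S₂.card : ℝ) * T.card) ≤ (eCount Gc S₂ T : ℝ) := by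
            rw [hs2]
            have hat0 : (0:ℝ) ≤ a*t := mul_nonneg h0a h0t
            have hx2 : η*q*(a*t) ≤ (D - (1-η)*q)*(a*t) :=
              mul_le_mul_of_nonneg_right (by linarith only [hqD]) hat0
            have hx3 : η*q*(η*(s*t)) ≤ η*q*(a*t) := by
              have h := mul_le_mul_of_nonneg_right ha h0t
              refine mul_le_mul_of_nonneg_left ?_ hηq0
              linarith only [h]
            have hx11 : (1-η)*q*(a*b) ≤ (1-η)*q*(a*t) :=
              mul_le_mul_of_nonneg_left (mul_le_mul_of_nonneg_left hbT h0a) h1ηq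
            have hη312 : η^3 ≤ 1/2*η^2 := by
              have h := mul_le_mul_of_nonneg_left hη2 (sq_nonneg η)
              calc η^3 = η^2*η := by ring
                _ ≤ η^2*(1/2) := by linarith only [h]
                _ = 1/2*η^2 := by ring
            have hx6 := mul_le_mul_of_nonneg_right hη312 (mul_nonneg hq0.le (mul_nonneg h0s h0t))
            have hgat : (0:ℝ) ≤ η^3*q/2*(a*t) := mul_nonneg hg0 hat0
            linarith only [hsplit, hDst, hsple, hc1, hx11, hx2, hx3, hx6, hgat]
          have hq1n : q * ((S₂.card : ℝ) * T.card) ≤ (eCount Gc S₂ T : ℝ) :=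
            le_trans (mul_le_mul_of_nonneg_right hDgq (by positivity)) hkey
          have hq2n : (2*p - (m:ℝ) * (η^3*q/2)) * ((S₂.card : ℝ) * T.card) ≤
              (eCount Gc S₂ T : ℝ) :=
            le_trans (mul_le_mul_of_nonneg_right hDgmg (by positivity)) hkey
          have hfS₂ : lam * n ≤ δ^(m+1) * S₂.card := by
            have hpc := (pow_pos hδ0 (m+1)).le
            calc lam * n ≤ δ^(m+1+1) * s := hfS
              _ = δ^(m+1) * (δ*s) := by ring
              _ ≤ δ^(m+1) * S₂.card := mul_le_mul_of_nonneg_left h2 hpc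
          have hfT' : lam * n ≤ δ^(m+1) * T.card := by
            refine le_trans hfT ?_
            have h := pow_le_pow_of_le_one hδ0.le hδ1 (show m+1 ≤ m+1+1 by omega)
            exact mul_le_mul_of_nonneg_right h h0t
          obtain ⟨S', T', hsub1, hsub2, hcard1, hcard2, hLR'⟩ :=
            ih S₂ T hS₂f hTf hfS₂ hfT' hq1n hq2n
          refine ⟨S', T', hsub1.trans sdiff_subset, hsub2, ?_, ?_, hLR'⟩
          · have hpc := (pow_pos hδ0 m).le
            calc δ^(m+1) * s = δ^m * (δ*s) := by ring
              _ ≤ δ^m * S₂.card := mul_le_mul_of_nonneg_left h2 hpc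
              _ ≤ (S'.card : ℝ) := hcard1
          · have h := pow_le_pow_of_le_one hδ0.le hδ1 (show m ≤ m+1 by omega)
            calc δ^(m+1) * t ≤ δ^m * t := mul_le_mul_of_nonneg_right h h0t
              _ ≤ (T'.card : ℝ) := hcard2
      · push_neg at h1
        have recurse1 : (D + η^3*q/2) * ((U₁.card : ℝ) * T₂.card) ≤ (eCount Gc U₁ T₂ : ℝ) →
            ∃ S' T', S' ⊆ S ∧ T' ⊆ T ∧
              δ^(m+1) * S.card ≤ (S'.card : ℝ) ∧ δ^(m+1) * T.card ≤ (T'.card : ℝ) ∧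
              LowerRegularPair Gc η q S' T' := by
          intro hkey
          have hq1n : q * ((U₁.card : ℝ) * T₂.card) ≤ (eCount Gc U₁ T₂ : ℝ) :=
            le_trans (mul_le_mul_of_nonneg_right hDgq (by positivity)) hkey
          have hq2n : (2*p - (m:ℝ) * (η^3*q/2)) * ((U₁.card : ℝ) * T₂.card) ≤
              (eCount Gc U₁ T₂ : ℝ) :=
            le_trans (mul_le_mul_of_nonneg_right hDgmg (by positivity)) hkey
          have hδa : δ * s ≤ a := le_trans hδsη ha
          have hfU : lam * n ≤ δ^(m+1) * U₁.card := by
            have hpc := (pow_pos hδ0 (m+1)).le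
            calc lam * n ≤ δ^(m+1+1) * s := hfS
              _ = δ^(m+1) * (δ*s) := by ring
              _ ≤ δ^(m+1) * a := mul_le_mul_of_nonneg_left hδa hpc
          have hfT₂ : lam * n ≤ δ^(m+1) * T₂.card := by
            have hpc := (pow_pos hδ0 (m+1)).le
            calc lam * n ≤ δ^(m+1+1) * t := hfT
              _ = δ^(m+1) * (δ*t) := by ring
              _ ≤ δ^(m+1) * T₂.card := mul_le_mul_of_nonneg_left h1 hpc
          obtain ⟨S', T', hsub1, hsub2, hcard1, hcard2, hLR'⟩ :=
            ih U₁ T₂ hU₁f hT₂f hfU hfT₂ hq1n hq2n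
          refine ⟨S', T', hsub1.trans hU₁S, hsub2.trans sdiff_subset, ?_, ?_, hLR'⟩
          · have hpc := (pow_pos hδ0 m).le
            calc δ^(m+1) * s = δ^m * (δ*s) := by ring
              _ ≤ δ^m * a := mul_le_mul_of_nonneg_left hδa hpc
              _ ≤ (S'.card : ℝ) := hcard1
          · have hpc := (pow_pos hδ0 m).le
            calc δ^(m+1) * t = δ^m * (δ*t) := by ring
              _ ≤ δ^m * T₂.card := mul_le_mul_of_nonneg_left h1 hpc
              _ ≤ (T'.card : ℝ) := hcard2
        by_cases h2 : (S₂.card : ℝ) < δ * s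
        · apply recurse1
          rw [ht2]
          have hpad2 : (eCount Γ T S₂ : ℝ) ≤ 2*p*t*(δ*s) :=
            pad_bound hunif hlam0 hlam2 hp.le hxy.symm hTf hS₂f hlnt h2.le hls hδsn
          have hc2 : (eCount Gc S₂ T : ℝ) ≤ η^3*q/16*(s*t) := by
            have hcomm : (eCount Γ S₂ T : ℝ) = (eCount Γ T S₂ : ℝ) := by
              exact_mod_cast congrArg (Nat.cast : ℕ → ℝ) (eCount_comm Γ S₂ T)
            calc (eCount Gc S₂ T : ℝ) ≤ (eCount Γ T S₂ : ℝ) := by rw [← hcomm]; exact hceS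
              _ ≤ 2*p*t*(δ*s) := hpad2
              _ = (2*p*δ)*(s*t) := by ring
              _ = η^3*q/16*(s*t) := by rw [h2pδ]
          have hx5 : η^3*q/2*(a*t) ≤ η^3*q/2*(s*t) :=
            mul_le_mul_of_nonneg_left (mul_le_mul_of_nonneg_right haS h0t) hg0
          have hDsat : (0:ℝ) ≤ D * ((s-a)*t) :=
            mul_nonneg hD0 (mul_nonneg (by linarith only [haS]) h0t)
          linarith only [hsplit, hDst, hsple, hc2, hx1, hx5, hDsat, hx7, hx8]
        · push_neg at h2
          by_cases hgood : (D + η^3*q/2) * ((U₁.card : ℝ) * T₂.card) ≤ (eCount Gc U₁ T₂ : ℝ)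
          · exact recurse1 hgood
          · push_neg at hgood
            rw [ht2] at hgood
            have hkey : (D + η^3*q/2) * ((S₂.card : ℝ) * T.card) ≤ (eCount Gc S₂ T : ℝ) := by
              rw [hs2]
              by_contra hbad
              push_neg at hbad
              linarith only [hsplit, hDst, hsple, hgood.le, hbad.le, hx1, hx7, hx8]
            have hq1n : q * ((S₂.card : ℝ) * T.card) ≤ (eCount Gc S₂ T : ℝ) :=
              le_trans (mul_le_mul_of_nonneg_right hDgq (by positivity)) hkey
            have hq2n : (2*p - (m:ℝ) * (η^3*q/2)) * ((S₂.card : ℝ) * T.card) ≤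
                (eCount Gc S₂ T : ℝ) :=
              le_trans (mul_le_mul_of_nonneg_right hDgmg (by positivity)) hkey
            have hfS₂ : lam * n ≤ δ^(m+1) * S₂.card := by
              have hpc := (pow_pos hδ0 (m+1)).le
              calc lam * n ≤ δ^(m+1+1) * s := hfS
                _ = δ^(m+1) * (δ*s) := by ring
                _ ≤ δ^(m+1) * S₂.card := mul_le_mul_of_nonneg_left h2 hpc
            have hfT' : lam * n ≤ δ^(m+1) * T.card := by
              refine le_trans hfT ?_
              have h := pow_le_pow_of_le_one hδ0.le hδ1 (show m+1 ≤ m+1+1 by omega)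
              exact mul_le_mul_of_nonneg_right h h0t
            obtain ⟨S', T', hsub1, hsub2, hcard1, hcard2, hLR'⟩ :=
              ih S₂ T hS₂f hTf hfS₂ hfT' hq1n hq2n
            refine ⟨S', T', hsub1.trans sdiff_subset, hsub2, ?_, ?_, hLR'⟩
            · have hpc := (pow_pos hδ0 m).le
              calc δ^(m+1) * s = δ^m * (δ*s) := by ring
                _ ≤ δ^m * S₂.card := mul_le_mul_of_nonneg_left h2 hpc
                _ ≤ (S'.card : ℝ) := hcard1
            · have h := pow_le_pow_of_le_one hδ0.le hδ1 (show m ≤ m+1 by omega)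
              calc δ^(m+1) * t ≤ δ^m * t := mul_le_mul_of_nonneg_right h h0t
                _ ≤ (T'.card : ℝ) := hcard2


set_option maxHeartbeats 1000000 in
lemma extraction
    (hr : 2 ≤ r) (hp : 0 < p) (hq0 : 0 < q) (hpq : p = 2 * r * q)
    (hlam0 : 0 < lam) (hlam2 : lam ≤ 1/2) (hln : 1 ≤ lam * n)
    (hunif : ∀ x y : X, H.Adj x y →
      ∀ A B : Finset (X × Fin n), (∀ w ∈ A, w.1 = x) → (∀ w ∈ B, w.1 = y) →
        lam * n ≤ (A.card : ℝ) → lam * n ≤ (B.card : ℝ) →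
        (1 - lam) * A.card * B.card * p ≤ (eCount Γ A B : ℝ) ∧
        (eCount Γ A B : ℝ) ≤ (1 + lam) * A.card * B.card * p)
    {η : ℝ} (hη0 : 0 < η) (hη2 : η ≤ 1/2)
    {x y : X} (hxy : H.Adj x y) (A B : Finset (X × Fin n))
    (hAf : ∀ w ∈ A, w.1 = x) (hBf : ∀ w ∈ B, w.1 = y)
    (hfA : lam * n ≤ delf r η ^ (Kf r η + 1) * A.card)
    (hfB : lam * n ≤ delf r η ^ (Kf r η + 1) * B.card) :
    ∃ (c : Fin r) (S' T' : Finset (X × Fin n)), S' ⊆ A ∧ T' ⊆ B ∧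
      muf r η * A.card ≤ (S'.card : ℝ) ∧ muf r η * B.card ≤ (T'.card : ℝ) ∧
      LowerRegularPair (colourSubgraph Γ χ c) η q S' T' := by
  have hr1 : (1:ℝ) ≤ r := by exact_mod_cast le_trans one_le_two hr
  have hrpos : (0:ℝ) < r := lt_of_lt_of_le one_pos hr1
  have hδ0 : 0 < delf r η := delf_pos (le_trans (by norm_num) hr) hη0
  have hδ1 : delf r η ≤ 1 := by
    have := delf_le (le_trans (by norm_num) hr) hη0 hη2; linarith
  have h0A : (0:ℝ) ≤ A.card := Nat.cast_nonneg _
  have h0B : (0:ℝ) ≤ B.card := Nat.cast_nonneg _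
  have hpow1 : delf r η ^ (Kf r η + 1) ≤ 1 := pow_le_one₀ hδ0.le hδ1
  have hA1 : lam * n ≤ (A.card : ℝ) := by
    refine le_trans hfA ?_
    have h := mul_le_mul_of_nonneg_right hpow1 h0A
    linarith only [h]
  have hB1 : lam * n ≤ (B.card : ℝ) := by
    refine le_trans hfB ?_
    have h := mul_le_mul_of_nonneg_right hpow1 h0B
    linarith only [h]
  obtain ⟨c, hc⟩ := exists_majority (show 0 < r by omega) Γ χ A B
  set Gc := colourSubgraph Γ χ c with hGcdef
  have hlow := (hunif x y hxy A B hAf hBf hA1 hB1).1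
  have hcast : (eCount Γ A B : ℝ) ≤ (r : ℝ) * (eCount Gc A B : ℝ) := by
    exact_mod_cast hc
  have hab0 : (0:ℝ) ≤ (A.card : ℝ) * B.card := mul_nonneg h0A h0B
  have hq1 : q * ((A.card : ℝ) * B.card) ≤ (eCount Gc A B : ℝ) := by
    have h3 : (r:ℝ) * ((1-lam)*(2*q)*((A.card : ℝ)*B.card)) ≤ (r:ℝ) * (eCount Gc A B : ℝ) := by
      have h := le_trans hlow hcast
      rw [hpq] at h
      linarith only [h]
    have h4 := (mul_le_mul_iff_right₀ hrpos).1 h3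
    have h6 : (0:ℝ) ≤ q * ((A.card : ℝ)*B.card) := mul_nonneg hq0.le hab0
    have h7 := mul_nonneg (show (0:ℝ) ≤ 1-2*lam by linarith) h6
    linarith only [h4, h6, h7]
  have hq2 : (2*p - (Kf r η) * (η^3*q/2)) * ((A.card : ℝ) * B.card) ≤ (eCount Gc A B : ℝ) := by
    have hK : (8*(r:ℝ)/η^3 : ℝ) ≤ (Kf r η : ℕ) := Nat.le_ceil _
    have hident : (8*(r:ℝ)/η^3)*(η^3*q/2) = 2*p := by
      rw [hpq]; field_simp; ring
    have hmul := mul_le_mul_of_nonneg_right hK (show (0:ℝ) ≤ η^3*q/2 by positivity)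
    have hnonpos : 2*p - (Kf r η) * (η^3*q/2) ≤ 0 := by
      rw [← hident]; linarith only [hmul]
    have h8 := mul_le_mul_of_nonneg_right hnonpos hab0
    have h9 : (0:ℝ) ≤ (eCount Gc A B : ℝ) := Nat.cast_nonneg _
    nlinarith only [h8, h9]
  have hrec := rec_lemma hr hp hq0 hpq hlam0 hlam2 hln hunif hη0 hη2 hxy c (Kf r η)
    A B hAf hBf (by simpa [delf] using hfA) (by simpa [delf] using hfB) hq1 hq2
  obtain ⟨S', T', h1, h2, h3, h4, h5⟩ := hrec
  exact ⟨c, S', T', h1, h2, by simpa [muf, delf] using h3, by simpa [muf, delf] using h4, h5⟩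

lemma greedy_levels (Δ : ℕ) (hΔ : 1 ≤ Δ) (hdeg : ∀ x : X, (H.neighborSet x).ncard ≤ Δ) :
    ∃ lvl : Sym2 X → ℕ, (∀ e ∈ H.edgeFinset, lvl e < 2*Δ - 1) ∧
      ∀ e₁ ∈ H.edgeFinset, ∀ e₂ ∈ H.edgeFinset, e₁ ≠ e₂ → (∃ z, z ∈ e₁ ∧ z ∈ e₂) →
        lvl e₁ ≠ lvl e₂ := by
  classical
  have hdegF : ∀ z : X, (H.incidenceFinset z).card ≤ Δ := by
    intro z
    rw [SimpleGraph.card_incidenceFinset_eq_degree, ← SimpleGraph.card_neighborFinset_eq_degree,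
      SimpleGraph.neighborFinset_def]
    have h := hdeg z
    rwa [Set.ncard_eq_toFinset_card'] at h
  suffices h : ∀ E : Finset (Sym2 X), E ⊆ H.edgeFinset → ∃ lvl : Sym2 X → ℕ,
      (∀ e ∈ E, lvl e < 2*Δ - 1) ∧
      ∀ e₁ ∈ E, ∀ e₂ ∈ E, e₁ ≠ e₂ → (∃ z, z ∈ e₁ ∧ z ∈ e₂) → lvl e₁ ≠ lvl e₂ by
    obtain ⟨lvl, h1, h2⟩ := h H.edgeFinset subset_rfl
    exact ⟨lvl, h1, h2⟩
  intro E
  induction E using Finset.induction_on with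
  | empty => exact fun _ => ⟨fun _ => 0, by simp, by simp⟩
  | @insert e E' hne ihE =>
    intro hsub
    obtain ⟨lvl, hlt, hconf⟩ := ihE (fun e' he' => hsub (mem_insert_of_mem he'))
    have heE : e ∈ H.edgeFinset := hsub (mem_insert_self e E')
    induction e using Sym2.ind with
    | _ u v =>
    set M := E'.filter (fun e' => ∃ z, z ∈ e' ∧ z ∈ s(u,v)) with hM
    have hMsub : M ⊆ ((H.incidenceFinset u).erase s(u,v)) ∪
        ((H.incidenceFinset v).erase s(u,v)) := by
      intro e' he'
      simp only [hM, mem_filter] at he'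
      obtain ⟨he'E, z, hz1, hz2⟩ := he'
      have he'H : e' ∈ H.edgeFinset := hsub (mem_insert_of_mem he'E)
      have hne' : e' ≠ s(u,v) := by
        rintro rfl
        exact hne he'E
      rw [Sym2.mem_iff] at hz2
      rcases hz2 with rfl | rfl
      · refine mem_union_left _ (mem_erase.2 ⟨hne', ?_⟩)
        rw [SimpleGraph.mem_incidenceFinset]
        exact ⟨SimpleGraph.mem_edgeFinset.1 he'H, hz1⟩
      · refine mem_union_right _ (mem_erase.2 ⟨hne', ?_⟩)
        rw [SimpleGraph.mem_incidenceFinset]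
        exact ⟨SimpleGraph.mem_edgeFinset.1 he'H, hz1⟩
    have hincu : s(u,v) ∈ H.incidenceFinset u := by
      rw [SimpleGraph.mem_incidenceFinset]
      exact ⟨SimpleGraph.mem_edgeFinset.1 heE, Sym2.mem_mk_left u v⟩
    have hincv : s(u,v) ∈ H.incidenceFinset v := by
      rw [SimpleGraph.mem_incidenceFinset]
      exact ⟨SimpleGraph.mem_edgeFinset.1 heE, Sym2.mem_mk_right u v⟩
    have hcard : M.card ≤ 2*Δ - 2 := by
      have h1 : ((H.incidenceFinset u).erase s(u,v)).card ≤ Δ - 1 := by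
        rw [card_erase_of_mem hincu]
        exact Nat.sub_le_sub_right (hdegF u) 1
      have h2 : ((H.incidenceFinset v).erase s(u,v)).card ≤ Δ - 1 := by
        rw [card_erase_of_mem hincv]
        exact Nat.sub_le_sub_right (hdegF v) 1
      have h3 := card_le_card hMsub
      have h4 := card_union_le ((H.incidenceFinset u).erase s(u,v))
        ((H.incidenceFinset v).erase s(u,v))
      omega
    have himg : (M.image lvl).card ≤ 2*Δ - 2 := le_trans (card_image_le) hcard
    have hnonempty : ((range (2*Δ - 1)) \ (M.image lvl)).Nonempty := by
      rw [← card_pos]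
      have h5 := le_card_sdiff (M.image lvl) (range (2*Δ - 1))
      rw [card_range] at h5
      omega
    obtain ⟨v0, hv0⟩ := hnonempty
    rw [mem_sdiff, mem_range] at hv0
    refine ⟨Function.update lvl s(u,v) v0, ?_, ?_⟩
    · intro e' he'
      rcases mem_insert.1 he' with rfl | he'
      · rw [Function.update_self]; exact hv0.1
      · rw [Function.update_of_ne (by rintro rfl; exact hne he')]
        exact hlt e' he'
    · intro e₁ he₁ e₂ he₂ hne12 hshare
      rcases mem_insert.1 he₁ with rfl | he₁ <;> rcases mem_insert.1 he₂ with rfl | he₂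
      · exact absurd rfl hne12
      · rw [Function.update_self, Function.update_of_ne (by rintro rfl; exact hne he₂)]
        intro heq
        apply hv0.2
        rw [mem_image]
        refine ⟨e₂, ?_, heq.symm⟩
        rw [hM, mem_filter]
        obtain ⟨z, hz1, hz2⟩ := hshare
        exact ⟨he₂, z, hz2, hz1⟩
      · rw [Function.update_self, Function.update_of_ne (by rintro rfl; exact hne he₁)]
        intro heq
        apply hv0.2
        rw [mem_image]
        refine ⟨e₁, ?_, heq⟩
        rw [hM, mem_filter]
        obtain ⟨z, hz1, hz2⟩ := hshare
        exact ⟨he₁, z, hz1, hz2⟩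
      · rw [Function.update_of_ne (by rintro rfl; exact hne he₁),
          Function.update_of_ne (by rintro rfl; exact hne he₂)]
        exact hconf e₁ he₁ e₂ he₂ hne12 hshare

end Working

/-- For every `r, Δ ≥ 2` and `ε > 0` there is `λ > 0` such that for every
`p ∈ (0,1]` and every sufficiently large `n` the following holds. Let `H` be a graph
on at least two vertices with `Δ(H) ≤ Δ` and let `Γ` (on vertex set `X × Fin n`,
with parts `V_x = {x} × Fin n`) be a blow-up of `H` in which every edge `xy ∈ H` is
replaced by a `(λ, p)`-uniform bipartite graph between `V_x` and `V_y` (and there are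
no other edges). Then, for every `r`-colouring of the edges of `Γ`, there are a
colouring `φ` of the edges of `H` and sets `U_x ⊆ V_x` with `|U_x| ≥ λn` such that
`(U_x, U_y)` is `(ε, p/(2r))`-lower-regular in colour `φ(xy)` for every `xy ∈ H`. -/
theorem regular_subgraph_of_blowup (r Δ : ℕ) (hr : 2 ≤ r) (hΔ : 2 ≤ Δ) (ε : ℝ)
    (hε : 0 < ε) :
    ∃ lam : ℝ, 0 < lam ∧ ∀ p : ℝ, 0 < p → p ≤ 1 → ∃ n₀ : ℕ, ∀ n : ℕ, n₀ ≤ n →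
      ∀ (X : Type) [Fintype X] (H : SimpleGraph X), 2 ≤ Fintype.card X →
        (∀ x : X, (H.neighborSet x).ncard ≤ Δ) →
        ∀ Γ : SimpleGraph (X × Fin n),
          (∀ a b : X × Fin n, Γ.Adj a b → H.Adj a.1 b.1) →
          (∀ x y : X, H.Adj x y →
            ∀ A B : Finset (X × Fin n), (∀ w ∈ A, w.1 = x) → (∀ w ∈ B, w.1 = y) →
              lam * n ≤ (A.card : ℝ) → lam * n ≤ (B.card : ℝ) →
              (1 - lam) * A.card * B.card * p ≤ (eCount Γ A B : ℝ) ∧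
              (eCount Γ A B : ℝ) ≤ (1 + lam) * A.card * B.card * p) →
          ∀ χ : Sym2 (X × Fin n) → Fin r,
            ∃ (φ : Sym2 X → Fin r) (U : X → Finset (X × Fin n)),
              (∀ x, ∀ w ∈ U x, w.1 = x) ∧
              (∀ x, lam * n ≤ ((U x).card : ℝ)) ∧
              ∀ x y, H.Adj x y →
                LowerRegularPair (colourSubgraph Γ χ (φ s(x, y))) ε (p / (2 * r))
                  (U x) (U y) := by
  classical
  set ε₁ : ℝ := min ε (1/2) with hε₁def
  have hε₁0 : 0 < ε₁ := lt_min hε (by norm_num)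
  have hε₁2 : ε₁ ≤ 1/2 := min_le_right _ _
  have hε₁ε : ε₁ ≤ ε := min_le_left _ _
  have hr1 : 1 ≤ r := by omega
  set R : ℕ := 2*Δ - 1 with hRdef
  have hR1 : 1 ≤ R := by omega
  have hfacts := etaSeq_facts (r := r) hr1 hε₁0 hε₁2
  have hanti := etaSeq_anti (r := r) hr1 hε₁0 hε₁2
  set ηl : ℕ → ℝ := etaSeq r ε₁ with hηl
  set μstar : ℝ := muf r (ηl (R-1)) with hμdef
  set δstar : ℝ := delf r (ηl (R-1)) with hδstardef
  have hμ0 : 0 < μstar := muf_pos hr1 (hfacts (R-1)).1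
  have hμ1 : μstar ≤ 1 := muf_le_one hr1 (hfacts (R-1)).1 (hfacts (R-1)).2
  have hδs0 : 0 < δstar := delf_pos hr1 (hfacts (R-1)).1
  have hδs1 : δstar ≤ 1 := by
    have h := delf_le hr1 (hfacts (R-1)).1 (hfacts (R-1)).2
    have h2 := (hfacts (R-1)).2
    linarith
  set lam : ℝ := δstar * μstar^R / 2 with hlamdef
  have hμR0 : 0 < μstar^R := pow_pos hμ0 R
  have hlam0 : 0 < lam := by rw [hlamdef]; positivity
  have hμR1 : μstar^R ≤ 1 := pow_le_one₀ hμ0.le hμ1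
  have hlam2 : lam ≤ 1/2 := by
    rw [hlamdef]
    nlinarith only [hδs0, hδs1, hμR0, hμR1]
  refine ⟨lam, hlam0, ?_⟩
  intro p hp hp1
  refine ⟨⌈1/lam⌉₊ + 1, ?_⟩
  intro n hn X instX H hcardX hdeg Γ hΓH hunif χ
  set q : ℝ := p / (2 * (r:ℝ)) with hqdef
  have hrpos : (0:ℝ) < r := by
    have : (0:ℕ) < r := by omega
    exact_mod_cast this
  have hq0 : 0 < q := by rw [hqdef]; positivity
  have hpq : p = 2*(r:ℝ)*q := by rw [hqdef]; field_simp
  have hln : 1 ≤ lam * n := by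
    have h1 : (⌈1/lam⌉₊ : ℝ) ≤ (n:ℝ) := by
      exact_mod_cast le_trans (Nat.le_succ _) hn
    have h2 : 1/lam ≤ (⌈1/lam⌉₊ : ℝ) := Nat.le_ceil _
    have h3 : 1/lam ≤ (n:ℝ) := le_trans h2 h1
    rw [div_le_iff₀ hlam0] at h3
    nlinarith only [h3]
  obtain ⟨lvl, hlvl, hproper⟩ := greedy_levels (H := H) Δ (by omega) hdeg
  have hμle : ∀ ℓ, ℓ ≤ R-1 → μstar ≤ muf r (ηl ℓ) := fun ℓ hℓ =>
    muf_mono hr1 (hfacts (R-1)).1 (hanti ℓ (R-1) hℓ) (hfacts ℓ).2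
  have hδle : ∀ ℓ, ℓ ≤ R-1 → δstar ≤ delf r (ηl ℓ) := by
    intro ℓ hℓ
    rw [hδstardef, delf, delf]
    gcongr
    all_goals first
      | exact (hfacts (R-1)).1.le
      | exact hanti ℓ (R-1) hℓ
      | linarith
      | positivity
  have hfilter : ∀ (W₁ W₂ : Finset (X × Fin n)) (z z' : X), z ≠ z' →
      (∀ w ∈ W₁, w.1 = z) → (∀ w ∈ W₂, w.1 = z') →
      (W₁ ∪ W₂).filter (fun w => w.1 = z) = W₁ := by
    intro W₁ W₂ z z' hzz' h₁ h₂
    ext w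
    simp only [mem_filter, mem_union]
    constructor
    · rintro ⟨hw | hw, hz⟩
      · exact hw
      · exact absurd (hz ▸ (h₂ w hw).symm) (fun hh => hzz' hh.symm)
    · intro hw
      exact ⟨Or.inl hw, h₁ w hw⟩
  have main : ∀ k : ℕ, k ≤ R → ∃ (U : X → Finset (X × Fin n)) (φ : Sym2 X → Fin r),
      (∀ x, ∀ w ∈ U x, w.1 = x) ∧
      (∀ x, μstar^k * n ≤ ((U x).card : ℝ)) ∧
      (∀ x y, H.Adj x y → R ≤ lvl s(x,y) + k →
        LowerRegularPair (colourSubgraph Γ χ (φ s(x,y))) (ηl (R - k)) q (U x) (U y)) := by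
    intro k
    induction k with
    | zero =>
      intro _
      refine ⟨fun x => {x} ×ˢ (univ : Finset (Fin n)), fun _ => ⟨0, by omega⟩, ?_, ?_, ?_⟩
      · intro x w hw
        simp only [Finset.mem_product, Finset.mem_singleton] at hw
        exact hw.1
      · intro x
        rw [pow_zero, one_mul]
        simp
      · intro x y hxy hproc
        exfalso
        have := hlvl s(x,y) (SimpleGraph.mem_edgeFinset.2 hxy)
        omega
    | succ k ihk =>
      intro hk1
      obtain ⟨U, φ, hUf, hUcard, hULR⟩ := ihk (by omega)
      set ℓ : ℕ := R - k - 1 with hℓdef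
      have hℓR : ℓ ≤ R - 1 := by omega
      set M : Finset (Sym2 X) := H.edgeFinset.filter (fun e => lvl e = ℓ) with hMdef
      have huniq : ∀ (x : X) (e e' : Sym2 X), e ∈ M → e' ∈ M → x ∈ e → x ∈ e' → e = e' := by
        intro x e e' he he' hx hx'
        by_contra hne
        rw [hMdef, mem_filter] at he he'
        exact absurd (he.2.trans he'.2.symm) (hproper e he.1 e' he'.1 hne ⟨x, hx, hx'⟩)
      have hflow : ∀ z : X, lam * n ≤ delf r (ηl ℓ) ^ (Kf r (ηl ℓ) + 1) * ((U z).card : ℝ) := by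
        intro z
        have h1 : μstar * δstar ≤ delf r (ηl ℓ) ^ (Kf r (ηl ℓ) + 1) := by
          rw [pow_succ]
          rw [show delf r (ηl ℓ) ^ Kf r (ηl ℓ) = muf r (ηl ℓ) from rfl]
          exact mul_le_mul (hμle ℓ hℓR) (hδle ℓ hℓR) hδs0.le (muf_pos hr1 (hfacts ℓ).1).le
        have h2 : μstar^k * (n:ℝ) ≤ ((U z).card : ℝ) := hUcard z
        have h3 : μstar^R ≤ μstar^(k+1) := pow_le_pow_of_le_one hμ0.le hμ1 (by omega)
        have hn0 : (0:ℝ) ≤ (n:ℝ) := Nat.cast_nonneg _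
        have hμk0 : (0:ℝ) ≤ μstar^k := (pow_pos hμ0 k).le
        calc lam * n = (δstar * μstar^R / 2) * n := by rw [hlamdef]
          _ ≤ (δstar * μstar^R) * n := by
              have : δstar * μstar^R / 2 ≤ δstar * μstar^R := by nlinarith only [hδs0, hμR0]
              exact mul_le_mul_of_nonneg_right this hn0
          _ ≤ (δstar * μstar^(k+1)) * n := by
              have : δstar * μstar^R ≤ δstar * μstar^(k+1) :=
                mul_le_mul_of_nonneg_left h3 hδs0.le
              exact mul_le_mul_of_nonneg_right this hn0
          _ = (μstar * δstar) * (μstar^k * n) := by ring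
          _ ≤ delf r (ηl ℓ) ^ (Kf r (ηl ℓ) + 1) * (μstar^k * n) :=
              mul_le_mul_of_nonneg_right h1 (mul_nonneg hμk0 hn0)
          _ ≤ delf r (ηl ℓ) ^ (Kf r (ηl ℓ) + 1) * ((U z).card : ℝ) :=
              mul_le_mul_of_nonneg_left h2
                (pow_nonneg (delf_pos hr1 (hfacts ℓ).1).le _)
      have hdata : ∀ e : Sym2 X, ∃ Wc : Finset (X × Fin n) × Fin r, e ∈ M →
          ∀ x y, s(x,y) = e → H.Adj x y →
            ((Wc.1.filter (fun w => w.1 = x)) ⊆ U x ∧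
             muf r (ηl ℓ) * ((U x).card : ℝ) ≤ ((Wc.1.filter (fun w => w.1 = x)).card : ℝ) ∧
             LowerRegularPair (colourSubgraph Γ χ Wc.2) (ηl ℓ) q
               (Wc.1.filter (fun w => w.1 = x)) (Wc.1.filter (fun w => w.1 = y))) := by
        intro e
        by_cases he : e ∈ M
        case neg => exact ⟨(∅, ⟨0, by omega⟩), fun h => absurd h he⟩
        induction e using Sym2.ind with
        | _ u v =>
          have heH : s(u,v) ∈ H.edgeFinset := (mem_filter.1 he).1
          have hadj : H.Adj u v := SimpleGraph.mem_edgeFinset.1 heH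
          obtain ⟨c, S', T', hS'sub, hT'sub, hS'card, hT'card, hLR⟩ :=
            extraction hr hp hq0 hpq hlam0 hlam2 hln hunif (hfacts ℓ).1 (hfacts ℓ).2 hadj
              (U u) (U v) (hUf u) (hUf v) (hflow u) (hflow v)
          have hS'f : ∀ w ∈ S', w.1 = u := fun w hw => hUf u w (hS'sub hw)
          have hT'f : ∀ w ∈ T', w.1 = v := fun w hw => hUf v w (hT'sub hw)
          have hfe1 : (S' ∪ T').filter (fun w => w.1 = u) = S' :=
            hfilter S' T' u v hadj.ne hS'f hT'f
          have hfe2 : (S' ∪ T').filter (fun w => w.1 = v) = T' := by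
            rw [union_comm]
            exact hfilter T' S' v u hadj.ne.symm hT'f hS'f
          refine ⟨(S' ∪ T', c), fun _ x y hxy' hadj' => ?_⟩
          rcases Sym2.eq_iff.1 hxy' with ⟨rfl, rfl⟩ | ⟨rfl, rfl⟩
          · rw [hfe1, hfe2]
            exact ⟨hS'sub, hS'card, hLR⟩
          · rw [hfe1, hfe2]
            exact ⟨hT'sub, hT'card, LR_symm hLR⟩
      choose wf hwf using hdata
      set U' : X → Finset (X × Fin n) := fun x => if h : ∃ e, e ∈ M ∧ x ∈ e
          then ((wf h.choose).1.filter (fun w => w.1 = x)) else U x with hU'def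
      set φ' : Sym2 X → Fin r := fun e => if e ∈ M then (wf e).2 else φ e with hφ'def
      have hU'eq : ∀ (x : X) (e : Sym2 X), e ∈ M → x ∈ e →
          U' x = (wf e).1.filter (fun w => w.1 = x) := by
        intro x e he hx
        have hex : ∃ e', e' ∈ M ∧ x ∈ e' := ⟨e, he, hx⟩
        simp only [hU'def]
        rw [dif_pos hex]
        have heq := huniq x hex.choose e hex.choose_spec.1 he hex.choose_spec.2 hx
        rw [heq]
      have hmate : ∀ (x : X) (e : Sym2 X), e ∈ M → x ∈ e →
          ∃ y, e = s(x,y) ∧ H.Adj x y := by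
        intro x e he hx
        obtain ⟨y, rfl⟩ := Sym2.mem_iff_exists.1 hx
        have hmemE : s(x,y) ∈ H.edgeFinset := (mem_filter.1 he).1
        exact ⟨y, rfl, SimpleGraph.mem_edgeFinset.1 hmemE⟩
      have hU'sub : ∀ x, U' x ⊆ U x := by
        intro x
        by_cases hex : ∃ e, e ∈ M ∧ x ∈ e
        · obtain ⟨e, he, hx⟩ := hex
          rw [hU'eq x e he hx]
          obtain ⟨y, hey, hadj⟩ := hmate x e he hx
          exact (hwf e he x y hey.symm hadj).1
        · simp only [hU'def, dif_neg hex]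
          exact subset_rfl
      have hU'f : ∀ x, ∀ w ∈ U' x, w.1 = x := by
        intro x w hw
        by_cases hex : ∃ e, e ∈ M ∧ x ∈ e
        · obtain ⟨e, he, hx⟩ := hex
          rw [hU'eq x e he hx] at hw
          exact (mem_filter.1 hw).2
        · simp only [hU'def, dif_neg hex] at hw
          exact hUf x w hw
      have hU'card : ∀ x, μstar^(k+1) * n ≤ ((U' x).card : ℝ) := by
        intro x
        by_cases hex : ∃ e, e ∈ M ∧ x ∈ e
        · obtain ⟨e, he, hx⟩ := hex
          rw [hU'eq x e he hx]
          obtain ⟨y, hey, hadj⟩ := hmate x e he hx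
          have hcard := (hwf e he x y hey.symm hadj).2.1
          have h1 : μstar * (μstar^k * n) ≤ muf r (ηl ℓ) * ((U x).card : ℝ) :=
            mul_le_mul (hμle ℓ hℓR) (hUcard x)
              (mul_nonneg (pow_pos hμ0 k).le (Nat.cast_nonneg _))
              (muf_pos hr1 (hfacts ℓ).1).le
          calc μstar^(k+1) * n = μstar * (μstar^k * n) := by ring
            _ ≤ muf r (ηl ℓ) * ((U x).card : ℝ) := h1
            _ ≤ _ := hcard
        · simp only [hU'def, dif_neg hex]
          have h := hUcard x
          have hμk : μstar^(k+1) ≤ μstar^k := pow_le_pow_of_le_one hμ0.le hμ1 (by omega)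
          have hn0 : (0:ℝ) ≤ n := Nat.cast_nonneg _
          calc μstar^(k+1)*n ≤ μstar^k*n := mul_le_mul_of_nonneg_right hμk hn0
            _ ≤ _ := h
      have hsucc : ∀ j, ηl (j+1) = ηl j * muf r (ηl j) := by
        intro j
        rw [hηl]
        rfl
      have hshrink : ∀ z : X, ηl (ℓ+1) * ((U z).card : ℝ) ≤ ηl ℓ * ((U' z).card : ℝ) := by
        intro z
        by_cases hex : ∃ e, e ∈ M ∧ z ∈ e
        · obtain ⟨e, he, hz⟩ := hex
          rw [hU'eq z e he hz]
          obtain ⟨y, hey, hadj⟩ := hmate z e he hz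
          have hcard := (hwf e he z y hey.symm hadj).2.1
          calc ηl (ℓ+1) * ((U z).card : ℝ)
              = ηl ℓ * (muf r (ηl ℓ) * ((U z).card:ℝ)) := by rw [hsucc ℓ]; ring
            _ ≤ ηl ℓ * _ := mul_le_mul_of_nonneg_left hcard (hfacts ℓ).1.le
        · simp only [hU'def, dif_neg hex]
          exact mul_le_mul_of_nonneg_right (etaSeq_succ_le hr1 hε₁0 hε₁2 ℓ) (Nat.cast_nonneg _)
      refine ⟨U', φ', hU'f, hU'card, ?_⟩
      intro x y hadj hproc
      have hel : lvl s(x,y) < R := hlvl _ (SimpleGraph.mem_edgeFinset.2 hadj)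
      have hidx : R - (k+1) = ℓ := by omega
      rw [hidx]
      by_cases hnew : lvl s(x,y) = ℓ
      · have heM : s(x,y) ∈ M := by
          rw [hMdef, mem_filter]
          exact ⟨SimpleGraph.mem_edgeFinset.2 hadj, hnew⟩
        have hx : x ∈ s(x,y) := Sym2.mem_mk_left x y
        have hy : y ∈ s(x,y) := Sym2.mem_mk_right x y
        rw [hU'eq x s(x,y) heM hx, hU'eq y s(x,y) heM hy]
        have hφ : φ' s(x,y) = (wf s(x,y)).2 := by
          simp only [hφ'def]
          rw [if_pos heM]
        rw [hφ]
        exact (hwf s(x,y) heM x y rfl hadj).2.2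
      · have hold := hULR x y hadj (by omega)
        have hφ : φ' s(x,y) = φ s(x,y) := by
          simp only [hφ'def]
          rw [if_neg]
          rw [hMdef, mem_filter]
          rintro ⟨_, h⟩
          exact hnew h
        rw [hφ]
        have hRk : R - k = ℓ + 1 := by omega
        rw [hRk] at hold
        exact LR_shrink hold (hU'sub x) (hU'sub y) (hshrink x) (hshrink y)
          (etaSeq_succ_le hr1 hε₁0 hε₁2 ℓ) hq0.le
  obtain ⟨U, φ, h1, h2, h3⟩ := main R le_rfl
  refine ⟨φ, U, h1, ?_, ?_⟩
  · intro x
    have h := h2 x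
    have hlamμ : lam ≤ μstar^R := by
      rw [hlamdef]
      nlinarith only [hδs1, hμR0, hδs0]
    have hn0 : (0:ℝ) ≤ n := Nat.cast_nonneg _
    calc lam * n ≤ μstar^R * n := mul_le_mul_of_nonneg_right hlamμ hn0
      _ ≤ _ := h
  · intro x y hadj
    have h := h3 x y hadj (by omega)
    rw [show R - R = 0 from by omega] at h
    have h0 : ηl 0 = ε₁ := by rw [hηl]; rfl
    rw [h0] at h
    exact LR_mono h hε₁ε hq0.le
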